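/- Let M be an oriented pseudo-Riemannian surface in ℍ₃(τ) with unit normal N, g(N,N) = ε, shape operator A, ν = ε g(N,E₃), and T the tangential part of E₃. Then the Codazzi equation reads: ∇_X A(Y) − ∇_Y A(X) − A([X,Y]) = −4ενexecuted τ²[g(Y,T)X − g(X,T)Y] for all tangent fields X, Y (with the displayed right-hand side −4ε ν τ²[g(Y,T)X − g(X,T)Y]). -/

import Mathlib

noncomputable section

/-- Points of the Heisenberg group ℍ₃(τ), identified with ℝ³ (coordinates (x,y,z)). -/
abbrev Pt : Type := ℝ × ℝ × ℝ
/-- Tangent vectors, identified with ℝ³. -/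
abbrev Vec : Type := ℝ × ℝ × ℝ
/-- Vector fields on ℝ³. -/
abbrev VF : Type := Pt → Vec

/-- The Lorentzian metric g_τ = dx² + dy² − (dz − τ(y dx − x dy))² evaluated at `p`
on tangent vectors `U`, `V`. -/
def gH (τ : ℝ) (p : Pt) (U V : Vec) : ℝ :=
  U.1 * V.1 + U.2.1 * V.2.1
    - (U.2.2 - τ * (p.2.1 * U.1 - p.1 * U.2.1))
      * (V.2.2 - τ * (p.2.1 * V.1 - p.1 * V.2.1))

/-- E₁ = ∂x + τ y ∂z. -/
def E1 (τ : ℝ) : VF := fun p => (1, 0, τ * p.2.1)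
/-- E₂ = ∂y − τ x ∂z. -/
def E2 (τ : ℝ) : VF := fun p => (0, 1, -(τ * p.1))
/-- E₃ = ∂z. -/
def E3 : VF := fun _ => (0, 0, 1)

/-- Lie bracket of vector fields on ℝ³. -/
def bracket (X Y : VF) : VF := fun p => fderiv ℝ Y p (X p) - fderiv ℝ X p (Y p)

/-- Coefficients of a tangent vector `U` at `p` with respect to the frame E₁,E₂,E₃. -/
def coV (τ : ℝ) (p : Pt) (U : Vec) : Vec :=
  (U.1, U.2.1, U.2.2 - τ * (p.2.1 * U.1 - p.1 * U.2.1))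

/-- The Lorentzian cross product ∧ of ℍ₃(τ):
U ∧ V = (u₂v₃ − u₃v₂)E₁ − (u₁v₃ − u₃v₁)E₂ − (u₁v₂ − u₂v₁)E₃ in frame coefficients. -/
def crossP (τ : ℝ) (p : Pt) (U V : Vec) : Vec :=
  ((coV τ p U).2.1 * (coV τ p V).2.2 - (coV τ p U).2.2 * (coV τ p V).2.1) • E1 τ p
  - ((coV τ p U).1 * (coV τ p V).2.2 - (coV τ p U).2.2 * (coV τ p V).1) • E2 τ p
  - ((coV τ p U).1 * (coV τ p V).2.1 - (coV τ p U).2.1 * (coV τ p V).1) • E3 p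

/-- The Levi-Civita connection ∇^τ of g_τ, written out in the frame E₁,E₂,E₃,
using the Christoffel table ∇_{E₂}E₁ = τE₃ = −∇_{E₁}E₂, ∇_{E₃}E₁ = −τE₂ = ∇_{E₁}E₃,
∇_{E₃}E₂ = τE₁ = ∇_{E₂}E₃, ∇_{E_i}E_i = 0. -/
def nablaH (τ : ℝ) (X Y : VF) : VF := fun p =>
  (fderiv ℝ (fun q => (coV τ q (Y q)).1) p (X p)) • E1 τ p
  + (fderiv ℝ (fun q => (coV τ q (Y q)).2.1) p (X p)) • E2 τ p
  + (fderiv ℝ (fun q => (coV τ q (Y q)).2.2) p (X p)) • E3 p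
  + (τ * ((coV τ p (X p)).2.1 * (coV τ p (Y p)).2.2
        + (coV τ p (X p)).2.2 * (coV τ p (Y p)).2.1)) • E1 τ p
  - (τ * ((coV τ p (X p)).1 * (coV τ p (Y p)).2.2
        + (coV τ p (X p)).2.2 * (coV τ p (Y p)).1)) • E2 τ p
  + (τ * ((coV τ p (X p)).2.1 * (coV τ p (Y p)).1
        - (coV τ p (X p)).1 * (coV τ p (Y p)).2.1)) • E3 p

/-- The Riemann curvature tensor, R(X,Y)Z = ∇_X∇_Y Z − ∇_Y∇_X Z − ∇_{[X,Y]}Z. -/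
def Rcurv (τ : ℝ) (X Y Z : VF) : VF := fun p =>
  nablaH τ X (nablaH τ Y Z) p - nablaH τ Y (nablaH τ X Z) p
    - nablaH τ (bracket X Y) Z p

/-- The pointwise curvature tensor of ℍ₃(τ) in the algebraic form
R(X,Y)Z = 3τ²[g(Y,Z)X − g(X,Z)Y] + 4τ²[g(Y,E₃)g(Z,E₃)X − g(X,E₃)g(Z,E₃)Y
 + g(Y,Z)g(X,E₃)E₃ − g(X,Z)g(Y,E₃)E₃]. -/
def Rpt (τ : ℝ) (p : Pt) (X Y Z : Vec) : Vec :=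
  (3 * τ ^ 2) • (gH τ p Y Z • X - gH τ p X Z • Y)
  + (4 * τ ^ 2) • ((gH τ p Y (E3 p) * gH τ p Z (E3 p)) • X
    - (gH τ p X (E3 p) * gH τ p Z (E3 p)) • Y
    + (gH τ p Y Z * gH τ p X (E3 p)) • E3 p
    - (gH τ p X Z * gH τ p Y (E3 p)) • E3 p)

/-! For tangent `X`, `Y` only the `E₃`-terms of `R(X,Y)Z` have a normal component, and since
`g(E₃, N) = εν` and `g(X, E₃) = g(X, T)` that component is `g(−4εντ²[g(Y,T)X − g(X,T)Y], Z)`.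
So the Codazzi equation says that `C` and `−4εντ²[g(Y,T)X − g(X,T)Y]` have the same pairing
with every tangent vector, and both are tangent; as the induced metric on `span {X, Y}` is
nondegenerate, they coincide. -/

theorem LinearMap.BilinForm.eq_zero_of_mem_span_pair_of_apply_eq_zero
    {R M : Type*} [CommRing R] [NoZeroDivisors R] [AddCommGroup M] [Module R M]
    {B : LinearMap.BilinForm R M} {X Y u : M} (hu : u ∈ Submodule.span R {X, Y})
    (hX : B u X = 0) (hY : B u Y = 0) (hdet : B X X * B Y Y - B X Y * B Y X ≠ 0) :
    u = 0 := by
  obtain ⟨a, b, rfl⟩ := Submodule.mem_span_pair.mp hu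
  simp only [map_add, map_smul, LinearMap.add_apply, LinearMap.smul_apply, smul_eq_mul] at hX hY
  have ha : a * (B X X * B Y Y - B X Y * B Y X) = 0 := by
    linear_combination B Y Y * hX - B Y X * hY
  have hb : b * (B X X * B Y Y - B X Y * B Y X) = 0 := by
    linear_combination B X X * hY - B X Y * hX
  rw [(mul_eq_zero.mp ha).resolve_right hdet, (mul_eq_zero.mp hb).resolve_right hdet,
    zero_smul, zero_smul, add_zero]

def gHBilin (τ : ℝ) (p : Pt) : LinearMap.BilinForm ℝ Vec :=
  LinearMap.mk₂ ℝ (gH τ p)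
    (fun _ _ _ => by simp only [gH, Prod.fst_add, Prod.snd_add]; ring)
    (fun _ _ _ => by simp only [gH, Prod.smul_fst, Prod.smul_snd, smul_eq_mul]; ring)
    (fun _ _ _ => by simp only [gH, Prod.fst_add, Prod.snd_add]; ring)
    (fun _ _ _ => by simp only [gH, Prod.smul_fst, Prod.smul_snd, smul_eq_mul]; ring)

@[simp]
theorem gHBilin_apply (τ : ℝ) (p : Pt) (U V : Vec) : gHBilin τ p U V = gH τ p U V := rfl

theorem gH_comm (τ : ℝ) (p : Pt) (U V : Vec) : gH τ p U V = gH τ p V U := by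
  simp only [gH]; ring

theorem gH_Rpt_normal {τ ε ν : ℝ} {p : Pt} {N T X Y : Vec} (Z : Vec)
    (hN : gH τ p N N = ε) (hdec : E3 p = T + ν • N) (hTtan : gH τ p T N = 0)
    (hXtan : gH τ p X N = 0) (hYtan : gH τ p Y N = 0) :
    gH τ p (Rpt τ p X Y Z) N
      = gH τ p ((-(4 * ε * ν * τ ^ 2)) • (gH τ p Y T • X - gH τ p X T • Y)) Z := by
  simp only [Rpt, ← gHBilin_apply] at *
  set B := gHBilin τ p
  have hEN : B (E3 p) N = ν * ε := by
    rw [hdec, map_add, LinearMap.add_apply, map_smul, LinearMap.smul_apply, hTtan, hN,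
      smul_eq_mul, zero_add]
  have hE : ∀ U, B U N = 0 → B U (E3 p) = B U T := fun U hU => by
    rw [hdec, map_add, map_smul, hU, smul_zero, add_zero]
  simp only [map_add, map_sub, map_smul, LinearMap.add_apply, LinearMap.sub_apply,
    LinearMap.smul_apply, smul_eq_mul, hXtan, hYtan, hEN, hE X hXtan, hE Y hYtan]
  ring

theorem statement9_general (τ ε ν : ℝ) (p : Pt) (N T X Y C : Vec)
    (hN : gH τ p N N = ε)
    (hdec : E3 p = T + ν • N)
    (hTtan : gH τ p T N = 0)
    (hXtan : gH τ p X N = 0) (hYtan : gH τ p Y N = 0)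
    (hnd : gH τ p X X * gH τ p Y Y - (gH τ p X Y) ^ 2 ≠ 0)
    (hCspan : C ∈ Submodule.span ℝ ({X, Y} : Set Vec))
    (hcod : ∀ Z ∈ Submodule.span ℝ ({X, Y} : Set Vec),
      gH τ p (Rpt τ p X Y Z) N = gH τ p C Z) :
    C = (-(4 * ε * ν * τ ^ 2)) • (gH τ p Y T • X - gH τ p X T • Y) := by
  set D := (-(4 * ε * ν * τ ^ 2)) • (gH τ p Y T • X - gH τ p X T • Y)
  have hX : X ∈ Submodule.span ℝ ({X, Y} : Set Vec) := Submodule.subset_span (by simp)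
  have hY : Y ∈ Submodule.span ℝ ({X, Y} : Set Vec) := Submodule.subset_span (by simp)
  have hD : D ∈ Submodule.span ℝ ({X, Y} : Set Vec) :=
    Submodule.smul_mem _ _ (Submodule.sub_mem _ (Submodule.smul_mem _ _ hX)
      (Submodule.smul_mem _ _ hY))
  have hpair : ∀ Z ∈ Submodule.span ℝ ({X, Y} : Set Vec), gHBilin τ p (C - D) Z = 0 :=
    fun Z hZ => by
      rw [map_sub, LinearMap.sub_apply, gHBilin_apply, gHBilin_apply, ← hcod Z hZ,
        gH_Rpt_normal Z hN hdec hTtan hXtan hYtan, sub_self]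
  refine sub_eq_zero.mp
    (LinearMap.BilinForm.eq_zero_of_mem_span_pair_of_apply_eq_zero (sub_mem hCspan hD)
      (hpair X hX) (hpair Y hY) ?_)
  simpa only [gHBilin_apply, gH_comm τ p Y X, sq] using hnd

/-- the Codazzi equation for a surface in ℍ₃(τ):
∇_X A(Y) − ∇_Y A(X) − A[X,Y] = −4εντ²[g(Y,T)X − g(X,T)Y].
Here C denotes the tangent vector ∇_X A(Y) − ∇_Y A(X) − A[X,Y], characterized by the
hypersurface Codazzi equation g(R(X,Y)Z,N) = g(C,Z) for tangent Z. -/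
theorem statement9 (τ ε ν : ℝ) (hτ : τ ≠ 0) (p : Pt) (N T X Y C : Vec)
    (hε : ε = 1 ∨ ε = -1)
    (hN : gH τ p N N = ε)
    (hdec : E3 p = T + ν • N)
    (hTtan : gH τ p T N = 0)
    (hXtan : gH τ p X N = 0) (hYtan : gH τ p Y N = 0)
    (hnd : gH τ p X X * gH τ p Y Y - (gH τ p X Y) ^ 2 ≠ 0)
    (hTspan : T ∈ Submodule.span ℝ ({X, Y} : Set Vec))
    (hCspan : C ∈ Submodule.span ℝ ({X, Y} : Set Vec))
    (hcod : ∀ Z ∈ Submodule.span ℝ ({X, Y} : Set Vec),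
      gH τ p (Rpt τ p X Y Z) N = gH τ p C Z) :
    C = (-(4 * ε * ν * τ ^ 2)) • (gH τ p Y T • X - gH τ p X T • Y) :=
  statement9_general τ ε ν p N T X Y C hN hdec hTtan hXtan hYtan hnd hCspan hcod
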